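/- arXiv:1304.3135 — 7 statements merged into one kernel-verified Lean document; each statement's English description precedes it below -/
import Mathlib

section
/- If M is a matching set between B and A, then there exists a fair matching set M' between B and A achieving the same trading volume, i.e., M'.card = M.card. (Paper's Lemma 2.) -/
def IsMatchingSet {β α : Type*} [DecidableEq β] [DecidableEq α]
    (B : Finset β) (A : Finset α) (pb : β → ℝ) (pa : α → ℝ)
    (M : Finset (β × α)) : Prop :=
  (∀ x ∈ M, x.1 ∈ B ∧ x.2 ∈ A ∧ pa x.2 ≤ pb x.1) ∧
  (∀ x ∈ M, ∀ y ∈ M, (x.1 = y.1 → x.2 = y.2) ∧ (x.2 = y.2 → x.1 = y.1))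


def IsFair {β α : Type*} [DecidableEq β] [DecidableEq α]
    (B : Finset β) (A : Finset α) (pb : β → ℝ) (pa : α → ℝ)
    (M : Finset (β × α)) : Prop :=
  (∀ b ∈ B, ∀ b' ∈ B, pb b < pb b' → (∃ a, (b, a) ∈ M) → (∃ a, (b', a) ∈ M)) ∧
  (∀ a ∈ A, ∀ a' ∈ A, pa a' < pa a → (∃ b, (b, a) ∈ M) → (∃ b, (b, a') ∈ M))

/-- If `l` is pairwise related by `r`, `x ∈ l`, `x ≠ l[m]` and `¬ r l[m] x`,
then `x` occurs among the first `m` entries of `l`. -/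
lemma mem_take_of_not_rel {γ : Type*} {l : List γ} {r : γ → γ → Prop}
    (hs : l.Pairwise r) {m : ℕ} (hm : m < l.length) {x : γ} (hx : x ∈ l)
    (hne : x ≠ l[m]) (hno : ¬ r l[m] x) : x ∈ l.take m := by
  obtain ⟨j, hj, rfl⟩ := List.mem_iff_getElem.mp hx
  rcases lt_trichotomy j m with h | h | h
  · refine List.mem_iff_getElem.mpr ⟨j, by simp [List.length_take]; omega, ?_⟩
    simp [List.getElem_take]
  · exact absurd (by simp [h]) hne
  · exact absurd (List.pairwise_iff_getElem.mp hs m j hm hj h) hno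

theorem exists_fair_same_volume {β α : Type*} [DecidableEq β] [DecidableEq α]
    (B : Finset β) (A : Finset α) (pb : β → ℝ) (pa : α → ℝ)
    (M : Finset (β × α)) (hM : IsMatchingSet B A pb pa M) :
    ∃ M' : Finset (β × α), IsMatchingSet B A pb pa M' ∧ IsFair B A pb pa M' ∧
      M'.card = M.card := by
  classical
  obtain ⟨hmem, hinj⟩ := hM
  set k := M.card with hk
  -- injections into B and A
  have hfst_inj : Set.InjOn Prod.fst (M : Set (β × α)) := by
    intro x hx y hy h
    exact Prod.ext h ((hinj x hx y hy).1 h)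
  have hsnd_inj : Set.InjOn Prod.snd (M : Set (β × α)) := by
    intro x hx y hy h
    exact Prod.ext ((hinj x hx y hy).2 h) h
  have hkB : k ≤ B.card := by
    rw [hk, ← Finset.card_image_of_injOn hfst_inj]
    exact Finset.card_le_card (fun b hb => by
      obtain ⟨x, hx, rfl⟩ := Finset.mem_image.mp hb
      exact (hmem x hx).1)
  have hkA : k ≤ A.card := by
    rw [hk, ← Finset.card_image_of_injOn hsnd_inj]
    exact Finset.card_le_card (fun a ha => by
      obtain ⟨x, hx, rfl⟩ := Finset.mem_image.mp ha
      exact (hmem x hx).2.1)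
  -- sorted lists
  set rb : β → β → Prop := fun x y => pb y ≤ pb x with hrb
  set ra : α → α → Prop := fun x y => pa x ≤ pa y with hra
  haveI : IsTotal β rb := ⟨fun a b => le_total _ _⟩
  haveI : IsTrans β rb := ⟨fun a b c h1 h2 => le_trans h2 h1⟩
  haveI : IsTotal α ra := ⟨fun a b => le_total _ _⟩
  haveI : IsTrans α ra := ⟨fun a b c h1 h2 => le_trans h1 h2⟩
  set LB : List β := List.insertionSort rb B.toList with hLB
  set LA : List α := List.insertionSort ra A.toList with hLA
  have hLBperm : LB.Perm B.toList := List.perm_insertionSort rb B.toList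
  have hLAperm : LA.Perm A.toList := List.perm_insertionSort ra A.toList
  have hLBlen : LB.length = B.card := by rw [hLBperm.length_eq, Finset.length_toList]
  have hLAlen : LA.length = A.card := by rw [hLAperm.length_eq, Finset.length_toList]
  have hLBnd : LB.Nodup := hLBperm.nodup_iff.mpr B.nodup_toList
  have hLAnd : LA.Nodup := hLAperm.nodup_iff.mpr A.nodup_toList
  have hLBsorted : LB.Pairwise rb := List.pairwise_insertionSort rb B.toList
  have hLAsorted : LA.Pairwise ra := List.pairwise_insertionSort ra A.toList
  have hLBmem : ∀ b, b ∈ LB ↔ b ∈ B := fun b => by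
    rw [hLBperm.mem_iff, Finset.mem_toList]
  have hLAmem : ∀ a, a ∈ LA ↔ a ∈ A := fun a => by
    rw [hLAperm.mem_iff, Finset.mem_toList]
  have hkLB : k ≤ LB.length := hLBlen ▸ hkB
  have hkLA : k ≤ LA.length := hLAlen ▸ hkA
  -- index bounds helpers
  have hidxB : ∀ i, i < k → i < LB.length := fun i hi => lt_of_lt_of_le hi hkLB
  have hidxA : ∀ i, i < k → k - 1 - i < LA.length := fun i hi => by omega
  -- the key price inequality
  have key : ∀ i (hi : i < k), pa (LA[k - 1 - i]'(hidxA i hi)) ≤ pb (LB[i]'(hidxB i hi)) := by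
    intro i hi
    by_contra hlt
    push_neg at hlt
    set m := k - 1 - i with hm
    set c := pa (LA[m]'(hidxA i hi)) with hc
    -- bids with price ≥ c : at most i of them
    have hS1 : (B.filter (fun b => c ≤ pb b)).card ≤ i := by
      refine le_trans (le_trans (Finset.card_le_card ?_) (List.toFinset_card_le (LB.take i)))
        (by rw [List.length_take]; omega)
      intro b hb
      rw [Finset.mem_filter] at hb
      rw [List.mem_toFinset]
      refine mem_take_of_not_rel hLBsorted (hidxB i hi) ((hLBmem b).mpr hb.1) ?_ ?_
      · intro h; rw [h] at hb; exact absurd hb.2 (not_le.mpr hlt)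
      · intro h; exact absurd (le_trans hb.2 h) (not_le.mpr hlt)
    -- asks with price < c : at most m of them
    have hS2 : (A.filter (fun a => pa a < c)).card ≤ m := by
      refine le_trans (le_trans (Finset.card_le_card ?_) (List.toFinset_card_le (LA.take m)))
        (by rw [List.length_take]; omega)
      intro a ha
      rw [Finset.mem_filter] at ha
      rw [List.mem_toFinset]
      refine mem_take_of_not_rel hLAsorted (hidxA i hi) ((hLAmem a).mpr ha.1) ?_ ?_
      · intro h; rw [h] at ha; exact absurd ha.2 (lt_irrefl _)
      · intro h; exact absurd ha.2 (not_lt.mpr h)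
    -- split M
    have h1 : (M.filter (fun x => pa x.2 < c)).card ≤ (A.filter (fun a => pa a < c)).card := by
      refine Finset.card_le_card_of_injOn Prod.snd ?_ ?_
      · intro x hx
        rw [Finset.mem_coe, Finset.mem_filter] at hx ⊢
        exact ⟨(hmem x hx.1).2.1, hx.2⟩
      · intro x hx y hy h
        simp only [Finset.coe_filter, Set.mem_setOf_eq] at hx hy
        exact hsnd_inj (Finset.mem_coe.mpr hx.1) (Finset.mem_coe.mpr hy.1) h
    have h2 : (M.filter (fun x => ¬ pa x.2 < c)).card ≤ (B.filter (fun b => c ≤ pb b)).card := by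
      refine Finset.card_le_card_of_injOn Prod.fst ?_ ?_
      · intro x hx
        rw [Finset.mem_coe, Finset.mem_filter] at hx ⊢
        exact ⟨(hmem x hx.1).1, le_trans (not_lt.mp hx.2) (hmem x hx.1).2.2⟩
      · intro x hx y hy h
        simp only [Finset.coe_filter, Set.mem_setOf_eq] at hx hy
        exact hfst_inj (Finset.mem_coe.mpr hx.1) (Finset.mem_coe.mpr hy.1) h
    have := Finset.card_filter_add_card_filter_not (s := M) (fun x => pa x.2 < c)
    omega
  -- the new matching
  set L : List (β × α) := (LB.take k).zip ((LA.take k).reverse) with hL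
  have hlen1 : (LB.take k).length = k := by simp [hkLB]
  have hlen2 : ((LA.take k).reverse).length = k := by simp [hkLA]
  have hLlen : L.length = k := by rw [hL, List.length_zip, hlen1, hlen2, min_self]
  -- getElem description of L
  have hLget : ∀ j (hj : j < k), L[j]'(hLlen ▸ hj) =
      (LB[j]'(hidxB j hj), LA[k - 1 - j]'(hidxA j hj)) := by
    intro j hj
    simp only [hL, List.getElem_zip, List.getElem_take, List.getElem_reverse,
      List.length_take, Nat.min_eq_left hkLA]
  have hLmem : ∀ x, x ∈ L ↔ ∃ j, ∃ (hj : j < k),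
      x = (LB[j]'(hidxB j hj), LA[k - 1 - j]'(hidxA j hj)) := by
    intro x
    constructor
    · intro hx
      obtain ⟨j, hj, rfl⟩ := List.mem_iff_getElem.mp hx
      exact ⟨j, hLlen ▸ hj, hLget j (hLlen ▸ hj)⟩
    · rintro ⟨j, hj, rfl⟩
      rw [← hLget j hj]
      exact List.getElem_mem _
  have hLnd : L.Nodup := by
    have : (L.map Prod.fst).Nodup := by
      rw [hL, List.map_fst_zip (by rw [hlen1, hlen2])]
      exact hLBnd.sublist (List.take_sublist _ _)
    exact this.of_map _
  refine ⟨L.toFinset, ⟨?_, ?_⟩, ⟨?_, ?_⟩, ?_⟩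
  · -- membership and price condition
    intro x hx
    rw [List.mem_toFinset, hLmem] at hx
    obtain ⟨j, hj, rfl⟩ := hx
    exact ⟨(hLBmem _).mp (List.getElem_mem _), (hLAmem _).mp (List.getElem_mem _), key j hj⟩
  · -- injectivity
    intro x hx y hy
    rw [List.mem_toFinset, hLmem] at hx hy
    obtain ⟨j, hj, rfl⟩ := hx
    obtain ⟨j', hj', rfl⟩ := hy
    constructor
    · intro h
      simp only at h ⊢
      have : j = j' := (hLBnd.getElem_inj_iff).mp h
      subst this; rfl
    · intro h
      simp only at h ⊢
      have : k - 1 - j = k - 1 - j' := (hLAnd.getElem_inj_iff).mp h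
      have : j = j' := by omega
      subst this; rfl
  · -- fairness for bids
    intro b hb b' hb' hpb ⟨a, ha⟩
    rw [List.mem_toFinset, hLmem] at ha
    obtain ⟨j, hj, hEq⟩ := ha
    have hbj : b = LB[j]'(hidxB j hj) := congrArg Prod.fst hEq
    obtain ⟨j', hj', hj'eq⟩ := List.mem_iff_getElem.mp ((hLBmem b').mpr hb')
    by_cases h : j' < k
    · refine ⟨LA[k - 1 - j']'(hidxA j' h), ?_⟩
      rw [List.mem_toFinset, hLmem]
      exact ⟨j', h, by rw [hj'eq]⟩
    · exfalso
      have hjj' : j < j' := lt_of_lt_of_le hj (not_lt.mp h)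
      have := List.pairwise_iff_getElem.mp hLBsorted j j' (hidxB j hj) hj' hjj'
      rw [hj'eq, ← hbj] at this
      exact absurd hpb (not_lt.mpr this)
  · -- fairness for asks
    intro a ha a' ha' hpa ⟨b, hbm⟩
    rw [List.mem_toFinset, hLmem] at hbm
    obtain ⟨j, hj, hEq⟩ := hbm
    have haj : a = LA[k - 1 - j]'(hidxA j hj) := congrArg Prod.snd hEq
    obtain ⟨j', hj', hj'eq⟩ := List.mem_iff_getElem.mp ((hLAmem a').mpr ha')
    by_cases h : j' < k
    · refine ⟨LB[k - 1 - j']'(hidxB _ (by omega)), ?_⟩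
      rw [List.mem_toFinset, hLmem]
      refine ⟨k - 1 - j', by omega, ?_⟩
      simp only [Prod.mk.injEq]
      refine ⟨by trivial, ?_⟩
      rw [← hj'eq]
      simp only [show k - 1 - (k - 1 - j') = j' from by omega]
    · exfalso
      have hjj' : k - 1 - j < j' := lt_of_lt_of_le (by omega) (not_lt.mp h)
      have := List.pairwise_iff_getElem.mp hLAsorted (k - 1 - j) j' (hidxA j hj) hj' hjj'
      rw [hj'eq, ← haj] at this
      exact absurd hpa (not_lt.mpr this)
  · -- cardinality
    rw [List.toFinset_card_of_nodup hLnd, hLlen]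
end

section
/- Let M be a fair matching set between B and A, and let M' be any matching set between B and A with the same trading volume, M'.card = M.card. Then the reported overall profit of M' is at most that of M: ∑ (b,a) ∈ M', (pb b - pa a) ≤ ∑ (b,a) ∈ M, (pb b - pa a). (Paper's Corollary 1: given a fixed trading volume, a fair matching set maximizes the reported overall profit.) -/
lemma sum_le_of_cross {γ : Type*} [DecidableEq γ] (f : γ → ℝ) (S T : Finset γ)
    (hcard : S.card = T.card)
    (h : ∀ b ∈ S \ T, ∀ b' ∈ T \ S, f b ≤ f b') :
    ∑ b ∈ S, f b ≤ ∑ b ∈ T, f b := by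
  have hd : (S \ T).card = (T \ S).card := Finset.card_sdiff_comm hcard
  have key : ∑ b ∈ S \ T, f b ≤ ∑ b ∈ T \ S, f b := by
    let e := Finset.equivOfCardEq hd
    rw [← Finset.sum_coe_sort (S \ T) f, ← Finset.sum_coe_sort (T \ S) f,
      ← Equiv.sum_comp e (fun x : (T \ S : Finset γ) => f x)]
    exact Finset.sum_le_sum fun i _ => h i i.2 (e i) (e i).2
  have h1 := Finset.sum_inter_add_sum_sdiff S T f
  have h2 := Finset.sum_inter_add_sum_sdiff T S f
  rw [Finset.inter_comm] at h2
  linarith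

theorem fair_maximizes_reported_profit {β α : Type*} [DecidableEq β] [DecidableEq α]
    (B : Finset β) (A : Finset α) (pb : β → ℝ) (pa : α → ℝ)
    (M : Finset (β × α)) (hM : IsMatchingSet B A pb pa M) (hfair : IsFair B A pb pa M)
    (M' : Finset (β × α)) (hM' : IsMatchingSet B A pb pa M')
    (hcard : M'.card = M.card) :
    ∑ x ∈ M', (pb x.1 - pa x.2) ≤ ∑ x ∈ M, (pb x.1 - pa x.2) := by
  obtain ⟨hMmem, hMinj⟩ := hM
  obtain ⟨hM'mem, hM'inj⟩ := hM'
  set BM := M.image Prod.fst with hBM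
  set AM := M.image Prod.snd with hAM
  set BM' := M'.image Prod.fst with hBM'
  set AM' := M'.image Prod.snd with hAM'
  have injb : Set.InjOn Prod.fst (M : Set (β × α)) := fun x hx y hy hxy =>
    Prod.ext hxy ((hMinj x hx y hy).1 hxy)
  have inja : Set.InjOn Prod.snd (M : Set (β × α)) := fun x hx y hy hxy =>
    Prod.ext ((hMinj x hx y hy).2 hxy) hxy
  have injb' : Set.InjOn Prod.fst (M' : Set (β × α)) := fun x hx y hy hxy =>
    Prod.ext hxy ((hM'inj x hx y hy).1 hxy)
  have inja' : Set.InjOn Prod.snd (M' : Set (β × α)) := fun x hx y hy hxy =>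
    Prod.ext ((hM'inj x hx y hy).2 hxy) hxy
  have cb : BM.card = M.card := Finset.card_image_of_injOn injb
  have ca : AM.card = M.card := Finset.card_image_of_injOn inja
  have cb' : BM'.card = M'.card := Finset.card_image_of_injOn injb'
  have ca' : AM'.card = M'.card := Finset.card_image_of_injOn inja'
  have sb : ∑ x ∈ M, pb x.1 = ∑ b ∈ BM, pb b := (Finset.sum_image (fun x hx y hy h => injb hx hy h)).symm
  have sa : ∑ x ∈ M, pa x.2 = ∑ a ∈ AM, pa a := (Finset.sum_image (fun x hx y hy h => inja hx hy h)).symm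
  have sb' : ∑ x ∈ M', pb x.1 = ∑ b ∈ BM', pb b := (Finset.sum_image (fun x hx y hy h => injb' hx hy h)).symm
  have sa' : ∑ x ∈ M', pa x.2 = ∑ a ∈ AM', pa a := (Finset.sum_image (fun x hx y hy h => inja' hx hy h)).symm
  -- bids: ∑_{BM'} pb ≤ ∑_{BM} pb
  have hb : ∑ b ∈ BM', pb b ≤ ∑ b ∈ BM, pb b := by
    apply sum_le_of_cross pb BM' BM (by rw [cb', cb, hcard])
    intro b hb b' hb'
    simp only [Finset.mem_sdiff, hBM, hBM', Finset.mem_image] at hb hb'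
    obtain ⟨⟨x, hx, hx1⟩, hnb⟩ := hb
    obtain ⟨⟨y, hy, hy1⟩, _⟩ := hb'
    by_contra hlt
    push_neg at hlt
    have hbB : b ∈ B := hx1 ▸ (hM'mem x hx).1
    have hb'B : b' ∈ B := hy1 ▸ (hMmem y hy).1
    obtain ⟨a, ha⟩ := hfair.1 b' hb'B b hbB hlt ⟨y.2, by rw [← hy1]; simpa using hy⟩
    exact hnb ⟨(b, a), ha, rfl⟩
  -- asks: ∑_{AM} pa ≤ ∑_{AM'} pa
  have ha : ∑ a ∈ AM, pa a ≤ ∑ a ∈ AM', pa a := by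
    apply sum_le_of_cross pa AM AM' (by rw [ca', ca, hcard])
    intro a ha a' ha'
    simp only [Finset.mem_sdiff, hAM, hAM', Finset.mem_image] at ha ha'
    obtain ⟨⟨x, hx, hx1⟩, _⟩ := ha
    obtain ⟨⟨y, hy, hy1⟩, hna⟩ := ha'
    by_contra hlt
    push_neg at hlt
    have haA : a ∈ A := hx1 ▸ (hMmem x hx).2.1
    have ha'A : a' ∈ A := hy1 ▸ (hM'mem y hy).2.1
    obtain ⟨b, hbmem⟩ := hfair.2 a haA a' ha'A hlt ⟨x.1, by rw [← hx1]; simpa using hx⟩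
    exact hna ⟨(b, a'), hbmem, rfl⟩
  simp only [Finset.sum_sub_distrib, sb, sa, sb', sa']
  linarith
end

section
/- If M is a matching set between B and A, then there exists an orderly matching set M' between B and A that matches exactly the same bids and exactly the same asks as M: the set of first components of pairs of M' equals that of M, and the set of second components of pairs of M' equals that of M. (Paper's Lemma 3.) -/
def IsOrderly {β α : Type*} (pb : β → ℝ) (pa : α → ℝ)
    (M : Finset (β × α)) : Prop :=
  ∀ x ∈ M, ∀ y ∈ M,
    (pa x.2 < pa y.2 → pb x.1 ≤ pb y.1) ∧ (pb x.1 < pb y.1 → pa x.2 ≤ pa y.2)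

theorem exists_orderly_same_bids_asks {β α : Type*} [DecidableEq β] [DecidableEq α]
    (B : Finset β) (A : Finset α) (pb : β → ℝ) (pa : α → ℝ)
    (M : Finset (β × α)) (hM : IsMatchingSet B A pb pa M) :
    ∃ M' : Finset (β × α), IsMatchingSet B A pb pa M' ∧ IsOrderly pb pa M' ∧
      M'.image Prod.fst = M.image Prod.fst ∧ M'.image Prod.snd = M.image Prod.snd := by
  classical
  obtain ⟨hmem, hinj⟩ := hM
  set S := M.image Prod.fst with hS
  set T := M.image Prod.snd with hT
  have hinjf : Set.InjOn Prod.fst M := fun x hx y hy h => Prod.ext h ((hinj x hx y hy).1 h)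
  have hinjs : Set.InjOn Prod.snd M := fun x hx y hy h => Prod.ext ((hinj x hx y hy).2 h) h
  have hcS : S.card = M.card := Finset.card_image_of_injOn hinjf
  have hcT : T.card = M.card := Finset.card_image_of_injOn hinjs
  set lb := S.toList.mergeSort (fun b b' => decide (pb b ≤ pb b')) with hlb
  set la := T.toList.mergeSort (fun a a' => decide (pa a ≤ pa a')) with hla
  have hpb : List.Perm lb S.toList := List.mergeSort_perm _ _
  have hpa : List.Perm la T.toList := List.mergeSort_perm _ _
  have hlbF : lb.toFinset = S := by ext b; simp [hpb.mem_iff]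
  have hlaF : la.toFinset = T := by ext a; simp [hpa.mem_iff]
  have hlbn : lb.Nodup := hpb.nodup_iff.2 S.nodup_toList
  have hlan : la.Nodup := hpa.nodup_iff.2 T.nodup_toList
  have hlbl : lb.length = M.card := by rw [hpb.length_eq, Finset.length_toList, hcS]
  have hlal : la.length = M.card := by rw [hpa.length_eq, Finset.length_toList, hcT]
  have hsb : List.Pairwise (fun b b' => pb b ≤ pb b') lb := by
    have := List.pairwise_mergeSort (le := fun b b' => decide (pb b ≤ pb b'))
      (fun a b c h₁ h₂ => by simp at *; linarith)
      (fun a b => by simpa using le_total (pb a) (pb b)) S.toList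
    simpa using this
  have hsa : List.Pairwise (fun a a' => pa a ≤ pa a') la := by
    have := List.pairwise_mergeSort (le := fun a a' => decide (pa a ≤ pa a'))
      (fun a b c h₁ h₂ => by simp at *; linarith)
      (fun a b => by simpa using le_total (pa a) (pa b)) T.toList
    simpa using this
  have hsb' : ∀ i j (hi : i < lb.length) (hj : j < lb.length), i ≤ j → pb lb[i] ≤ pb lb[j] := by
    intro i j hi hj hij
    rcases eq_or_lt_of_le hij with rfl | h
    · exact le_refl _
    · exact List.pairwise_iff_getElem.1 hsb i j hi hj h
  have hsa' : ∀ i j (hi : i < la.length) (hj : j < la.length), i ≤ j → pa la[i] ≤ pa la[j] := by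
    intro i j hi hj hij
    rcases eq_or_lt_of_le hij with rfl | h
    · exact le_refl _
    · exact List.pairwise_iff_getElem.1 hsa i j hi hj h
  -- feasibility of the sorted pairing
  have key : ∀ i (h1 : i < lb.length) (h2 : i < la.length), pa la[i] ≤ pb lb[i] := by
    intro i h1 h2
    by_contra hcon
    push_neg at hcon
    set p := pa la[i] with hp
    -- at most i asks have price < p
    have hTb : (T.filter fun a => pa a < p).card ≤ i := by
      have hsub : T.filter (fun a => pa a < p) ⊆
          (Finset.univ : Finset (Fin i)).image (fun j : Fin i => la[(j : ℕ)]'(lt_trans j.2 h2)) := by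
        intro a ha
        rw [Finset.mem_filter] at ha
        have haa : a ∈ la := by rw [← hlaF] at ha; exact List.mem_toFinset.1 ha.1
        obtain ⟨j, hj, rfl⟩ := List.mem_iff_getElem.1 haa
        have hji : j < i := by
          by_contra hji
          push_neg at hji
          exact absurd ha.2 (not_lt.2 (hsa' i j h2 hj hji))
        exact Finset.mem_image.2 ⟨⟨j, hji⟩, Finset.mem_univ _, rfl⟩
      calc (T.filter fun a => pa a < p).card ≤ _ := Finset.card_le_card hsub
        _ ≤ (Finset.univ : Finset (Fin i)).card := Finset.card_image_le
        _ = i := by simp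
    -- at least i+1 bids have price < p
    have hSb : i + 1 ≤ (S.filter fun b => pb b < p).card := by
      have := Finset.card_le_card_of_injOn
        (f := fun j : Fin (i+1) => lb[(j : ℕ)]'(lt_of_le_of_lt (Nat.lt_succ_iff.1 j.2) h1))
        (s := (Finset.univ : Finset (Fin (i+1)))) (t := S.filter fun b => pb b < p)
        (fun j _ => by
          refine Finset.mem_filter.2 ⟨?_, ?_⟩
          · rw [← hlbF]; exact List.mem_toFinset.2 (List.getElem_mem _)
          · exact lt_of_le_of_lt (hsb' _ i _ h1 (Nat.lt_succ_iff.1 j.2)) hcon)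
        (fun j _ k _ hjk => by
          have := (hlbn.getElem_inj_iff).1 hjk
          exact Fin.ext this)
      simpa using this
    -- bids with price < p inject into asks with price < p via M
    have hST : (S.filter fun b => pb b < p).card ≤ (T.filter fun a => pa a < p).card := by
      set MF := M.filter (fun x => pa x.2 < p) with hMF
      have hsub1 : S.filter (fun b => pb b < p) ⊆ MF.image Prod.fst := by
        intro b hb
        rw [Finset.mem_filter] at hb
        obtain ⟨x, hx, rfl⟩ := Finset.mem_image.1 hb.1
        exact Finset.mem_image.2 ⟨x, Finset.mem_filter.2
          ⟨hx, lt_of_le_of_lt (hmem x hx).2.2 hb.2⟩, rfl⟩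
      have hsub2 : MF.image Prod.snd ⊆ T.filter (fun a => pa a < p) := by
        intro a ha
        obtain ⟨x, hx, rfl⟩ := Finset.mem_image.1 ha
        rw [Finset.mem_filter] at hx
        exact Finset.mem_filter.2 ⟨Finset.mem_image.2 ⟨x, hx.1, rfl⟩, hx.2⟩
      have hMFf : (MF.image Prod.fst).card = MF.card :=
        Finset.card_image_of_injOn (hinjf.mono (fun x hx => Finset.mem_filter.1 hx |>.1))
      have hMFs : (MF.image Prod.snd).card = MF.card :=
        Finset.card_image_of_injOn (hinjs.mono (fun x hx => Finset.mem_filter.1 hx |>.1))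
      calc (S.filter fun b => pb b < p).card ≤ (MF.image Prod.fst).card :=
            Finset.card_le_card hsub1
        _ = (MF.image Prod.snd).card := by rw [hMFf, hMFs]
        _ ≤ _ := Finset.card_le_card hsub2
    omega
  -- zip helpers
  have memzip : ∀ i (h1 : i < lb.length) (h2 : i < la.length), (lb[i], la[i]) ∈ lb.zip la := by
    intro i h1 h2
    apply List.mem_iff_getElem.2 ⟨i, by simp [List.length_zip]; omega, ?_⟩
    have : (lb.zip la)[i]? = some (lb[i], la[i]) := List.getElem?_zip_eq_some.2
      ⟨List.getElem?_eq_getElem h1, List.getElem?_eq_getElem h2⟩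
    rw [List.getElem?_eq_getElem (by simp [List.length_zip]; omega)] at this
    exact Option.some_injective _ this
  have unzip : ∀ x ∈ lb.zip la,
      ∃ i, ∃ h1 : i < lb.length, ∃ h2 : i < la.length, lb[i] = x.1 ∧ la[i] = x.2 := by
    intro x hx
    obtain ⟨i, h, hi⟩ := List.mem_iff_getElem.1 hx
    simp only [List.length_zip, lt_min_iff] at h
    refine ⟨i, h.1, h.2, ?_⟩
    have h0 : (lb.zip la)[i]? = some x := by rw [List.getElem?_eq_getElem (by simp only [List.length_zip, lt_min_iff]; exact h), hi]
    have := List.getElem?_zip_eq_some.1 h0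
    rw [List.getElem?_eq_getElem h.1, List.getElem?_eq_getElem h.2] at this
    exact ⟨Option.some_injective _ this.1, Option.some_injective _ this.2⟩
  refine ⟨(lb.zip la).toFinset, ⟨?_, ?_⟩, ?_, ?_, ?_⟩
  · -- membership and feasibility
    intro x hx
    obtain ⟨i, h1, h2, e1, e2⟩ := unzip x (List.mem_toFinset.1 hx)
    have hx1 : x.1 ∈ S := by
      rw [← hlbF, ← e1]; exact List.mem_toFinset.2 (List.getElem_mem _)
    have hx2 : x.2 ∈ T := by
      rw [← hlaF, ← e2]; exact List.mem_toFinset.2 (List.getElem_mem _)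
    obtain ⟨y, hy, hy1⟩ := Finset.mem_image.1 hx1
    obtain ⟨z, hz, hz2⟩ := Finset.mem_image.1 hx2
    refine ⟨hy1 ▸ (hmem y hy).1, hz2 ▸ (hmem z hz).2.1, ?_⟩
    rw [← e1, ← e2]; exact key i h1 h2
  · -- injectivity
    intro x hx y hy
    obtain ⟨i, hi1, hi2, ei1, ei2⟩ := unzip x (List.mem_toFinset.1 hx)
    obtain ⟨j, hj1, hj2, ej1, ej2⟩ := unzip y (List.mem_toFinset.1 hy)
    constructor
    · intro h
      have : i = j := hlbn.getElem_inj_iff.1 (by rw [ei1, ej1, h])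
      subst this; rw [← ei2, ← ej2]
    · intro h
      have : i = j := hlan.getElem_inj_iff.1 (by rw [ei2, ej2, h])
      subst this; rw [← ei1, ← ej1]
  · -- orderly
    intro x hx y hy
    obtain ⟨i, hi1, hi2, ei1, ei2⟩ := unzip x (List.mem_toFinset.1 hx)
    obtain ⟨j, hj1, hj2, ej1, ej2⟩ := unzip y (List.mem_toFinset.1 hy)
    constructor
    · intro h
      have hij : i ≤ j := by
        by_contra hij
        push_neg at hij
        have := hsa' j i hj2 hi2 (le_of_lt hij)
        rw [ei2, ej2] at this; linarith
      rw [← ei1, ← ej1]; exact hsb' i j hi1 hj1 hij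
    · intro h
      have hij : i ≤ j := by
        by_contra hij
        push_neg at hij
        have := hsb' j i hj1 hi1 (le_of_lt hij)
        rw [ei1, ej1] at this; linarith
      rw [← ei2, ← ej2]; exact hsa' i j hi2 hj2 hij
  · -- same bids
    rw [← hlbF]
    ext b
    simp only [Finset.mem_image, List.mem_toFinset]
    constructor
    · rintro ⟨x, hx, rfl⟩
      exact (List.of_mem_zip (by simpa using hx)).1
    · intro hb
      obtain ⟨i, hi, rfl⟩ := List.mem_iff_getElem.1 hb
      exact ⟨(lb[i], la[i]), memzip i hi (by omega), rfl⟩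
  · -- same asks
    rw [← hlaF]
    ext a
    simp only [Finset.mem_image, List.mem_toFinset]
    constructor
    · rintro ⟨x, hx, rfl⟩
      exact (List.of_mem_zip (by simpa using hx)).2
    · intro ha
      obtain ⟨i, hi, rfl⟩ := List.mem_iff_getElem.1 ha
      exact ⟨(lb[i], la[i]), memzip i (by omega) hi, rfl⟩
end

section
/- If M is a matching set between B and A, then there exists a matching set M' between B and A that is both fair and orderly and achieves the same trading volume, i.e., M'.card = M.card. (Paper's Corollary 2.) -/
set_option linter.unusedSectionVars false
set_option linter.unusedVariables false
set_option maxHeartbeats 1000000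

namespace FOHelper

variable {γ : Type*} [DecidableEq γ]

noncomputable def psort (p : γ → ℝ) (l : List γ) : List γ :=
  l.mergeSort (fun x y => decide (p x ≤ p y))

lemma psort_perm (p : γ → ℝ) (l : List γ) : List.Perm (psort p l) l :=
  List.mergeSort_perm l _

lemma psort_sorted (p : γ → ℝ) (l : List γ) :
    (psort p l).Pairwise (fun x y => p x ≤ p y) := by
  have h := List.pairwise_mergeSort (le := fun x y : γ => decide (p x ≤ p y))
    (fun a b c h1 h2 => by simp only [decide_eq_true_eq] at *; linarith)
    (fun a b => by simpa using le_total (p a) (p b)) l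
  exact h.imp (fun h => by simpa using h)

lemma sorted_getElem_le {p : γ → ℝ} {l : List γ}
    (h : l.Pairwise (fun x y => p x ≤ p y)) {i j : ℕ} (hij : i ≤ j) (hj : j < l.length) :
    p (l[i]'(lt_of_le_of_lt hij hj)) ≤ p l[j] := by
  rcases lt_or_eq_of_le hij with h' | rfl
  · exact h.rel_get_of_lt (a := ⟨i, lt_of_le_of_lt hij hj⟩) (b := ⟨j, hj⟩) h'
  · exact le_refl _

lemma key_dom {p : γ → ℝ} {l l' : List γ}
    (hs : l.Pairwise (fun x y => p x ≤ p y)) (hs' : l'.Pairwise (fun x y => p x ≤ p y))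
    (hn : l.Nodup) (hn' : l'.Nodup) (hsub : ∀ x ∈ l', x ∈ l)
    {i : ℕ} (hi : i < l'.length) (hil : i < l.length) :
    p l[i] ≤ p l'[i] := by
  by_contra hcon
  push_neg at hcon
  have hidx : ∀ j : Fin (i+1), l.idxOf (l'[(j:ℕ)]'(lt_of_le_of_lt (Nat.lt_succ_iff.mp j.2) hi)) < i := by
    intro j
    have hj : (j:ℕ) < l'.length := lt_of_le_of_lt (Nat.lt_succ_iff.mp j.2) hi
    have hmem : l'[(j:ℕ)] ∈ l := hsub _ (List.getElem_mem hj)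
    have hlt : l.idxOf (l'[(j:ℕ)]) < l.length := List.idxOf_lt_length_iff.2 hmem
    by_contra hge
    push_neg at hge
    have h1 : p (l[i]'hil) ≤ p (l[l.idxOf (l'[(j:ℕ)])]'hlt) := sorted_getElem_le hs hge hlt
    rw [List.getElem_idxOf hlt] at h1
    have h2 : p (l'[(j:ℕ)]'hj) ≤ p (l'[i]'hi) :=
      sorted_getElem_le hs' (Nat.lt_succ_iff.mp j.2) hi
    linarith
  have hinj : Function.Injective
      (fun j : Fin (i+1) => (⟨l.idxOf (l'[(j:ℕ)]'(lt_of_le_of_lt (Nat.lt_succ_iff.mp j.2) hi)), hidx j⟩ : Fin i)) := by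
    intro j j' hjj
    simp only [Fin.mk.injEq] at hjj
    have hj : (j:ℕ) < l'.length := lt_of_le_of_lt (Nat.lt_succ_iff.mp j.2) hi
    have hj' : (j':ℕ) < l'.length := lt_of_le_of_lt (Nat.lt_succ_iff.mp j'.2) hi
    have hm : l'[(j:ℕ)] ∈ l := hsub _ (List.getElem_mem hj)
    have hm' : l'[(j':ℕ)] ∈ l := hsub _ (List.getElem_mem hj')
    have hlt : l.idxOf (l'[(j:ℕ)]) < l.length := List.idxOf_lt_length_iff.2 hm
    have hlt' : l.idxOf (l'[(j':ℕ)]) < l.length := List.idxOf_lt_length_iff.2 hm'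
    have : (l'[(j:ℕ)]'hj) = (l'[(j':ℕ)]'hj') := by
      rw [← List.getElem_idxOf hlt, ← List.getElem_idxOf hlt']
      congr 1
    have := (List.Nodup.getElem_inj_iff hn').mp this
    exact Fin.ext this
  have := Fintype.card_le_of_injective _ hinj
  simp at this

lemma key_dom_top {p : γ → ℝ} {l l' : List γ}
    (hs : l.Pairwise (fun x y => p x ≤ p y)) (hs' : l'.Pairwise (fun x y => p x ≤ p y))
    (hn : l.Nodup) (hn' : l'.Nodup) (hsub : ∀ x ∈ l', x ∈ l)
    (hle : l'.length ≤ l.length)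
    {i : ℕ} (hi : i < l'.length) (hi2 : l.length - l'.length + i < l.length) :
    p l'[i] ≤ p (l[l.length - l'.length + i]'hi2) := by
  have hsr : l.reverse.Pairwise (fun x y => (-p x) ≤ (-p y)) := by
    rw [List.pairwise_reverse]
    exact hs.imp (fun h => by linarith)
  have hsr' : l'.reverse.Pairwise (fun x y => (-p x) ≤ (-p y)) := by
    rw [List.pairwise_reverse]
    exact hs'.imp (fun h => by linarith)
  have hj : l'.length - 1 - i < l'.reverse.length := by
    rw [List.length_reverse]; omega
  have hjl : l'.length - 1 - i < l.reverse.length := by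
    rw [List.length_reverse]; omega
  have h := key_dom (p := fun x => -p x) hsr hsr'
    (List.nodup_reverse.2 hn) (List.nodup_reverse.2 hn')
    (fun x hx => List.mem_reverse.2 (hsub x (List.mem_reverse.1 hx)))
    hj hjl
  rw [List.getElem_reverse, List.getElem_reverse] at h
  have e1 : l'.length - 1 - (l'.length - 1 - i) = i := by omega
  have e2 : l.length - 1 - (l'.length - 1 - i) = l.length - l'.length + i := by omega
  simp only [e1, e2] at h
  linarith

end FOHelper

open FOHelper

theorem exists_fair_orderly_same_volume {β α : Type*} [DecidableEq β] [DecidableEq α]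
    (B : Finset β) (A : Finset α) (pb : β → ℝ) (pa : α → ℝ)
    (M : Finset (β × α)) (hM : IsMatchingSet B A pb pa M) :
    ∃ M' : Finset (β × α), IsMatchingSet B A pb pa M' ∧ IsFair B A pb pa M' ∧
      IsOrderly pb pa M' ∧ M'.card = M.card := by
  classical
  obtain ⟨hMP, hMU⟩ := hM
  set k := M.card with hk
  set Mb := M.image Prod.fst with hMbdef
  set Ma := M.image Prod.snd with hMadef
  have hMbcard : Mb.card = k :=
    Finset.card_image_of_injOn (fun x hx y hy h => Prod.ext h ((hMU x hx y hy).1 h))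
  have hMacard : Ma.card = k :=
    Finset.card_image_of_injOn (fun x hx y hy h => Prod.ext ((hMU x hx y hy).2 h) h)
  have hMbB : Mb ⊆ B := by
    intro b hb
    obtain ⟨x, hx, rfl⟩ := Finset.mem_image.1 hb
    exact (hMP x hx).1
  have hMaA : Ma ⊆ A := by
    intro a ha
    obtain ⟨x, hx, rfl⟩ := Finset.mem_image.1 ha
    exact (hMP x hx).2.1
  have hkB : k ≤ B.card := hMbcard ▸ Finset.card_le_card hMbB
  have hkA : k ≤ A.card := hMacard ▸ Finset.card_le_card hMaA
  set n := B.card with hn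
  set LB := psort pb B.toList with hLB
  set LA := psort pa A.toList with hLA
  set LMb := psort pb Mb.toList with hLMb
  set LMa := psort pa Ma.toList with hLMa
  have hLBlen : LB.length = n := (psort_perm _ _).length_eq.trans (Finset.length_toList B)
  have hLAlen : LA.length = A.card := (psort_perm _ _).length_eq.trans (Finset.length_toList A)
  have hLMblen : LMb.length = k :=
    ((psort_perm _ _).length_eq.trans (Finset.length_toList Mb)).trans hMbcard
  have hLMalen : LMa.length = k :=
    ((psort_perm _ _).length_eq.trans (Finset.length_toList Ma)).trans hMacard
  have hLBnd : LB.Nodup := ((psort_perm pb B.toList).nodup_iff).2 B.nodup_toList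
  have hLAnd : LA.Nodup := ((psort_perm pa A.toList).nodup_iff).2 A.nodup_toList
  have hLMbnd : LMb.Nodup := ((psort_perm pb Mb.toList).nodup_iff).2 Mb.nodup_toList
  have hLMand : LMa.Nodup := ((psort_perm pa Ma.toList).nodup_iff).2 Ma.nodup_toList
  have hLBmem : ∀ b, b ∈ LB ↔ b ∈ B := fun b =>
    (psort_perm _ _).mem_iff.trans (Finset.mem_toList)
  have hLAmem : ∀ a, a ∈ LA ↔ a ∈ A := fun a =>
    (psort_perm _ _).mem_iff.trans (Finset.mem_toList)
  have hLMbmem : ∀ b, b ∈ LMb ↔ b ∈ Mb := fun b =>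
    (psort_perm _ _).mem_iff.trans (Finset.mem_toList)
  have hLMamem : ∀ a, a ∈ LMa ↔ a ∈ Ma := fun a =>
    (psort_perm _ _).mem_iff.trans (Finset.mem_toList)
  have hLBs := psort_sorted pb B.toList
  have hLAs := psort_sorted pa A.toList
  have hLMbs := psort_sorted pb Mb.toList
  have hLMas := psort_sorted pa Ma.toList
  rw [← hLB] at hLBs; rw [← hLA] at hLAs; rw [← hLMb] at hLMbs; rw [← hLMa] at hLMas
  -- key inequality
  have hkey : ∀ (i : ℕ) (hi : i < k) (h1 : n - k + i < LB.length) (h2 : i < LA.length),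
      pa (LA[i]'h2) ≤ pb (LB[n-k+i]'h1) := by
    intro i hi h1 h2
    have hiMa : i < LMa.length := by rw [hLMalen]; exact hi
    have hiMb : i < LMb.length := by rw [hLMblen]; exact hi
    have hx : ∃ x ∈ M, pa (LMa[i]'hiMa) ≤ pa x.2 ∧ pb x.1 ≤ pb (LMb[i]'hiMb) := by
      set S1 := M.filter (fun x => pa x.2 < pa (LMa[i]'hiMa)) with hS1
      set S2 := M.filter (fun x => pb (LMb[i]'hiMb) < pb x.1) with hS2
      have hS1card : S1.card ≤ i := by
        have hc := Finset.card_le_card_of_injOn (s := S1) (t := Finset.range i)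
          (fun x : β × α => LMa.idxOf x.2) ?_ ?_
        · simpa using hc
        · intro x hx
          obtain ⟨hxM, hxlt⟩ := Finset.mem_filter.1 hx
          have hmem : x.2 ∈ LMa := (hLMamem _).2 (Finset.mem_image.2 ⟨x, hxM, rfl⟩)
          have hlt := List.idxOf_lt_length_iff.2 hmem
          rw [Finset.mem_coe, Finset.mem_range]
          by_contra hge
          push_neg at hge
          have hle := sorted_getElem_le hLMas hge hlt
          rw [List.getElem_idxOf hlt] at hle
          linarith
        · intro x hx y hy hxy
          have hxM := (Finset.mem_filter.1 hx).1
          have hyM := (Finset.mem_filter.1 hy).1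
          have hmx : x.2 ∈ LMa := (hLMamem _).2 (Finset.mem_image.2 ⟨x, hxM, rfl⟩)
          have hmy : y.2 ∈ LMa := (hLMamem _).2 (Finset.mem_image.2 ⟨y, hyM, rfl⟩)
          have hltx := List.idxOf_lt_length_iff.2 hmx
          have hlty := List.idxOf_lt_length_iff.2 hmy
          have heq : x.2 = y.2 := by
            rw [← List.getElem_idxOf hltx, ← List.getElem_idxOf hlty]
            congr 1
          exact Prod.ext ((hMU x hxM y hyM).2 heq) heq
      have hS2card : S2.card ≤ k - (i+1) := by
        have hc := Finset.card_le_card_of_injOn (s := S2) (t := Finset.Ico (i+1) k)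
          (fun x : β × α => LMb.idxOf x.1) ?_ ?_
        · simpa using hc
        · intro x hx
          obtain ⟨hxM, hxlt⟩ := Finset.mem_filter.1 hx
          have hmem : x.1 ∈ LMb := (hLMbmem _).2 (Finset.mem_image.2 ⟨x, hxM, rfl⟩)
          have hlt := List.idxOf_lt_length_iff.2 hmem
          rw [Finset.mem_coe, Finset.mem_Ico]
          constructor
          · by_contra hge
            push_neg at hge
            have hle := sorted_getElem_le hLMbs (Nat.lt_succ_iff.mp hge) hiMb
            rw [List.getElem_idxOf] at hle
            linarith
          · rw [← hLMblen]; exact hlt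
        · intro x hx y hy hxy
          have hxM := (Finset.mem_filter.1 hx).1
          have hyM := (Finset.mem_filter.1 hy).1
          have hmx : x.1 ∈ LMb := (hLMbmem _).2 (Finset.mem_image.2 ⟨x, hxM, rfl⟩)
          have hmy : y.1 ∈ LMb := (hLMbmem _).2 (Finset.mem_image.2 ⟨y, hyM, rfl⟩)
          have hltx := List.idxOf_lt_length_iff.2 hmx
          have hlty := List.idxOf_lt_length_iff.2 hmy
          have heq : x.1 = y.1 := by
            rw [← List.getElem_idxOf hltx, ← List.getElem_idxOf hlty]
            congr 1
          exact Prod.ext heq ((hMU x hxM y hyM).1 heq)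
      have hunion : (S1 ∪ S2).card < M.card := by
        have h1' := Finset.card_union_le S1 S2
        have : (S1 ∪ S2).card ≤ i + (k - (i+1)) := le_trans h1' (by omega)
        omega
      have hns : ¬ M ⊆ S1 ∪ S2 := fun hsub' =>
        absurd (Finset.card_le_card hsub') (not_le.2 hunion)
      obtain ⟨x, hxM, hxn⟩ := Finset.not_subset.1 hns
      rw [Finset.mem_union] at hxn
      push_neg at hxn
      refine ⟨x, hxM, ?_, ?_⟩
      · by_contra h'
        push_neg at h'
        exact hxn.1 (Finset.mem_filter.2 ⟨hxM, h'⟩)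
      · by_contra h'
        push_neg at h'
        exact hxn.2 (Finset.mem_filter.2 ⟨hxM, h'⟩)
    obtain ⟨x, hxM, hxa, hxb⟩ := hx
    have c1 : pa (LA[i]'h2) ≤ pa (LMa[i]'hiMa) := by
      refine key_dom hLAs hLMas hLAnd hLMand ?_ hiMa h2
      intro a ha
      exact (hLAmem a).2 (hMaA ((hLMamem a).1 ha))
    have c2 : pb (LMb[i]'hiMb) ≤ pb (LB[n-k+i]'h1) := by
      have hsubb : ∀ b ∈ LMb, b ∈ LB := fun b hb => (hLBmem b).2 (hMbB ((hLMbmem b).1 hb))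
      have hlen : LMb.length ≤ LB.length := by rw [hLMblen, hLBlen]; exact hkB
      have h2' : LB.length - LMb.length + i < LB.length := by rw [hLMblen, hLBlen]; omega
      have hres := key_dom_top hLBs hLMbs hLBnd hLMbnd hsubb hlen hiMb h2'
      have e : LB.length - LMb.length + i = n - k + i := by rw [hLBlen, hLMblen]
      simp only [e] at hres
      exact hres
    have c3 : pa x.2 ≤ pb x.1 := (hMP x hxM).2.2
    linarith
  -- construction
  set topB := LB.drop (n - k) with htopB
  set botA := LA.take k with hbotA
  have htlen : topB.length = k := by rw [htopB, List.length_drop, hLBlen]; omega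
  have hblen : botA.length = k := by rw [hbotA, List.length_take, hLAlen]; omega
  set L := topB.zip botA with hLdef
  have hLlen : L.length = k := by rw [hLdef, List.length_zip, htlen, hblen, min_self]
  have hbB : ∀ (i : ℕ), i < k → n - k + i < LB.length := by intro i hi; rw [hLBlen]; omega
  have hbA : ∀ (i : ℕ), i < k → i < LA.length := by intro i hi; rw [hLAlen]; omega
  have hLget : ∀ (i : ℕ) (hi : i < k),
      L[i]'(by rw [hLlen]; exact hi) =
        (LB[n-k+i]'(hbB i hi), LA[i]'(hbA i hi)) := by
    intro i hi
    show (topB.zip botA)[i]'_ = _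
    rw [List.getElem_zip]
    refine Prod.ext ?_ ?_
    · show topB[i]'_ = _
      show (LB.drop (n-k))[i]'_ = _
      rw [← List.getElem_drop']
    · show botA[i]'_ = _
      show (LA.take k)[i]'_ = _
      rw [List.getElem_take]
  have hLnd : L.Nodup := by
    have hmap : L.map Prod.fst = topB := by
      rw [hLdef]; exact List.map_fst_zip (by rw [htlen, hblen])
    have htnd : topB.Nodup := hLBnd.sublist (by rw [htopB]; exact List.drop_sublist _ _)
    exact List.Nodup.of_map Prod.fst (hmap ▸ htnd)
  refine ⟨L.toFinset, ?_, ?_, ?_, ?_⟩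
  · -- matching
    constructor
    · intro x hx
      rw [List.mem_toFinset, List.mem_iff_getElem] at hx
      obtain ⟨i, hi, rfl⟩ := hx
      have hik : i < k := by rwa [hLlen] at hi
      rw [hLget i hik]
      refine ⟨?_, ?_, ?_⟩
      · exact (hLBmem _).1 (List.getElem_mem _)
      · exact (hLAmem _).1 (List.getElem_mem _)
      · exact hkey i hik _ _
    · intro x hx y hy
      rw [List.mem_toFinset, List.mem_iff_getElem] at hx hy
      obtain ⟨i, hi, rfl⟩ := hx
      obtain ⟨j, hj, rfl⟩ := hy
      have hik : i < k := by rwa [hLlen] at hi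
      have hjk : j < k := by rwa [hLlen] at hj
      rw [hLget i hik, hLget j hjk]
      constructor
      · intro h
        have : n - k + i = n - k + j := (List.Nodup.getElem_inj_iff hLBnd).mp h
        have : i = j := by omega
        subst this; rfl
      · intro h
        have : i = j := (List.Nodup.getElem_inj_iff hLAnd).mp h
        subst this; rfl
  · -- fair
    constructor
    · intro b hb b' hb' hlt ⟨a, haM⟩
      rw [List.mem_toFinset, List.mem_iff_getElem] at haM
      obtain ⟨i, hi, hieq⟩ := haM
      have hik : i < k := by rwa [hLlen] at hi
      rw [hLget i hik] at hieq
      have hbval : b = LB[n-k+i]'(hbB i hik) := by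
        have := congrArg Prod.fst hieq; simpa using this.symm
      obtain ⟨j, hj, hjeq⟩ := List.mem_iff_getElem.1 ((hLBmem b').2 hb')
      have hjge : n - k ≤ j := by
        by_contra hlt'
        push_neg at hlt'
        have : pb (LB[j]'hj) ≤ pb (LB[n-k+i]'(hbB i hik)) :=
          sorted_getElem_le hLBs (by omega) _
        rw [hjeq, ← hbval] at this
        linarith
      set i' := j - (n - k) with hi'
      have hi'k : i' < k := by
        have := hj; rw [hLBlen] at this; omega
      refine ⟨LA[i']'(hbA i' hi'k), ?_⟩
      rw [List.mem_toFinset]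
      have : L[i']'(by rw [hLlen]; exact hi'k) = (b', LA[i']'(hbA i' hi'k)) := by
        rw [hLget i' hi'k]
        refine Prod.ext ?_ rfl
        show LB[n-k+i']'_ = b'
        have e : n - k + i' = j := by omega
        rw [← hjeq]
        congr 1
      rw [← this]
      exact List.getElem_mem _
    · intro a ha a' ha' hlt ⟨b, hbM⟩
      rw [List.mem_toFinset, List.mem_iff_getElem] at hbM
      obtain ⟨i, hi, hieq⟩ := hbM
      have hik : i < k := by rwa [hLlen] at hi
      rw [hLget i hik] at hieq
      have haval : a = LA[i]'(hbA i hik) := by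
        have := congrArg Prod.snd hieq; simpa using this.symm
      obtain ⟨j, hj, hjeq⟩ := List.mem_iff_getElem.1 ((hLAmem a').2 ha')
      have hjk : j < k := by
        by_contra hge
        push_neg at hge
        have : pa (LA[i]'(hbA i hik)) ≤ pa (LA[j]'hj) :=
          sorted_getElem_le hLAs (by omega) _
        rw [hjeq, ← haval] at this
        linarith
      refine ⟨LB[n-k+j]'(hbB j hjk), ?_⟩
      rw [List.mem_toFinset]
      have : L[j]'(by rw [hLlen]; exact hjk) = (LB[n-k+j]'(hbB j hjk), a') := by
        rw [hLget j hjk]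
        refine Prod.ext rfl ?_
        show LA[j]'_ = a'
        exact hjeq
      rw [← this]
      exact List.getElem_mem _
  · -- orderly
    intro x hx y hy
    rw [List.mem_toFinset, List.mem_iff_getElem] at hx hy
    obtain ⟨i, hi, rfl⟩ := hx
    obtain ⟨j, hj, rfl⟩ := hy
    have hik : i < k := by rwa [hLlen] at hi
    have hjk : j < k := by rwa [hLlen] at hj
    rw [hLget i hik, hLget j hjk]
    constructor
    · intro h
      have hij : i ≤ j := by
        by_contra hgt
        push_neg at hgt
        have : pa (LA[j]'(hbA j hjk)) ≤ pa (LA[i]'(hbA i hik)) :=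
          sorted_getElem_le hLAs (le_of_lt hgt) _
        simp only at h
        linarith
      exact sorted_getElem_le hLBs (by omega) _
    · intro h
      have hij : i ≤ j := by
        by_contra hgt
        push_neg at hgt
        have : pb (LB[n-k+j]'(hbB j hjk)) ≤ pb (LB[n-k+i]'(hbB i hik)) :=
          sorted_getElem_le hLBs (by omega) _
        simp only at h
        linarith
      exact sorted_getElem_le hLAs hij _
  · rw [List.toFinset_card_of_nodup hLnd, hLlen]
end

section
/- There exists a matching set M* between B and A that is fair and orderly and achieves maximal trading volume: for every matching set M between B and A, M.card ≤ M*.card. (Paper's Corollary 3.) -/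
private lemma aux_nodup_zip {β α : Type*} :
    ∀ {l1 : List β} (l2 : List α), l1.Nodup → (l1.zip l2).Nodup
  | [], _, _ => by simp
  | _ :: _, [], _ => by simp [List.zip_nil_right]
  | a :: l1, b :: l2, h => by
    rw [List.nodup_cons] at h
    rw [List.zip_cons_cons, List.nodup_cons]
    exact ⟨fun hm => h.1 (List.of_mem_zip hm).1, aux_nodup_zip l2 h.2⟩

private lemma aux_card_filter {γ : Type*} [DecidableEq γ] (S : Finset γ) (l : List γ)
    (h : l.Perm S.toList) (p : γ → Prop) [DecidablePred p] :
    (S.filter p).card = (l.filter (fun x => decide (p x))).length := by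
  rw [(h.filter _).length_eq]
  have h3 : (S.toList.filter (fun x => decide (p x))).Perm (S.filter p).toList := by
    refine (List.perm_ext_iff_of_nodup (S.nodup_toList.filter _) (S.filter p).nodup_toList).mpr
      fun a => ?_
    simp [List.mem_filter, Finset.mem_toList, Finset.mem_filter]
  rw [h3.length_eq, Finset.length_toList]

set_option maxHeartbeats 2000000 in
theorem exists_fair_orderly_maximal {β α : Type*} [DecidableEq β] [DecidableEq α]
    (B : Finset β) (A : Finset α) (pb : β → ℝ) (pa : α → ℝ) :
    ∃ Mstar : Finset (β × α), IsMatchingSet B A pb pa Mstar ∧ IsFair B A pb pa Mstar ∧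
      IsOrderly pb pa Mstar ∧
      ∀ M : Finset (β × α), IsMatchingSet B A pb pa M → M.card ≤ Mstar.card := by
  classical
  obtain ⟨bl, hblp, hbls⟩ : ∃ l : List β, l.Perm B.toList ∧ l.Pairwise (fun x y => pb x ≤ pb y) := by
    refine ⟨B.toList.mergeSort (fun x y => decide (pb x ≤ pb y)), List.mergeSort_perm _ _, ?_⟩
    have := List.pairwise_mergeSort (le := fun x y => decide (pb x ≤ pb y))
      (fun a b c h1 h2 => by simp at h1 h2 ⊢; linarith)
      (fun a b => by simpa using le_total _ _) B.toList
    simpa using this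
  obtain ⟨al, halp, hals⟩ : ∃ l : List α, l.Perm A.toList ∧ l.Pairwise (fun x y => pa x ≤ pa y) := by
    refine ⟨A.toList.mergeSort (fun x y => decide (pa x ≤ pa y)), List.mergeSort_perm _ _, ?_⟩
    have := List.pairwise_mergeSort (le := fun x y => decide (pa x ≤ pa y))
      (fun a b c h1 h2 => by simp at h1 h2 ⊢; linarith)
      (fun a b => by simpa using le_total _ _) A.toList
    simpa using this
  have hbln : bl.Nodup := B.nodup_toList.perm hblp.symm
  have haln : al.Nodup := A.nodup_toList.perm halp.symm
  have hblB : ∀ x ∈ bl, x ∈ B := fun x hx => Finset.mem_toList.mp (hblp.mem_iff.mp hx)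
  have halA : ∀ x ∈ al, x ∈ A := fun x hx => Finset.mem_toList.mp (halp.mem_iff.mp hx)
  have hBbl : ∀ x ∈ B, x ∈ bl := fun x hx => hblp.mem_iff.mpr (Finset.mem_toList.mpr hx)
  have hAal : ∀ x ∈ A, x ∈ al := fun x hx => halp.mem_iff.mpr (Finset.mem_toList.mpr hx)
  have hbmono : ∀ (i j : ℕ) (hij : i ≤ j) (hj : j < bl.length),
      pb (bl[i]'(lt_of_le_of_lt hij hj)) ≤ pb bl[j] := by
    intro i j hij hj
    rcases hij.lt_or_eq with h | h
    · exact List.pairwise_iff_getElem.mp hbls i j (h.trans hj) hj h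
    · subst h; exact le_refl _
  have hamono : ∀ (i j : ℕ) (hij : i ≤ j) (hj : j < al.length),
      pa (al[i]'(lt_of_le_of_lt hij hj)) ≤ pa al[j] := by
    intro i j hij hj
    rcases hij.lt_or_eq with h | h
    · exact List.pairwise_iff_getElem.mp hals i j (h.trans hj) hj h
    · subst h; exact le_refl _
  set P : ℕ → Prop := fun k => k ≤ bl.length ∧ k ≤ al.length ∧
      ∀ x ∈ (bl.drop (bl.length - k)).zip (al.take k), pa x.2 ≤ pb x.1 with hP
  have hP0 : P 0 := by simp [hP]
  set k := Nat.findGreatest P (min bl.length al.length) with hk_def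
  have hPk : P k := Nat.findGreatest_spec (Nat.zero_le _) hP0
  have hkn : k ≤ bl.length := hPk.1
  have hkm : k ≤ al.length := hPk.2.1
  have hdl : (bl.drop (bl.length - k)).length = k := by rw [List.length_drop]; omega
  have htl : (al.take k).length = k := by rw [List.length_take]; omega
  have hzl : ((bl.drop (bl.length - k)).zip (al.take k)).length = k := by
    rw [List.length_zip, hdl, htl, min_self]
  set Mstar := ((bl.drop (bl.length - k)).zip (al.take k)).toFinset with hM_def
  have hmem : ∀ x : β × α, x ∈ Mstar ↔
      ∃ i, ∃ hi : i < k, x = (bl[bl.length - k + i]'(by omega), al[i]'(by omega)) := by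
    intro x
    rw [hM_def, List.mem_toFinset, List.mem_iff_getElem]
    constructor
    · rintro ⟨i, hi, rfl⟩
      rw [hzl] at hi
      refine ⟨i, hi, ?_⟩
      rw [List.getElem_zip, List.getElem_drop, List.getElem_take]
    · rintro ⟨i, hi, rfl⟩
      refine ⟨i, by omega, ?_⟩
      rw [List.getElem_zip, List.getElem_drop, List.getElem_take]
  have hmatch : IsMatchingSet B A pb pa Mstar := by
    constructor
    · intro x hx
      obtain ⟨i, hi, rfl⟩ := (hmem x).mp hx
      refine ⟨hblB _ (List.getElem_mem _), halA _ (List.getElem_mem _), ?_⟩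
      have hxz := List.mem_toFinset.mp hx
      exact hPk.2.2 _ hxz
    · intro x hx y hy
      obtain ⟨i, hi, rfl⟩ := (hmem x).mp hx
      obtain ⟨j, hj, rfl⟩ := (hmem y).mp hy
      constructor
      · intro h1
        simp only at h1 ⊢
        have hij : bl.length - k + i = bl.length - k + j :=
          hbln.getElem_inj_iff.mp h1
        have : i = j := by omega
        subst this; rfl
      · intro h1
        simp only at h1 ⊢
        have : i = j := haln.getElem_inj_iff.mp h1
        subst this; rfl
  have hfair : IsFair B A pb pa Mstar := by
    constructor
    · rintro b hb b' hb' hlt ⟨a, haM⟩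
      obtain ⟨i, hi, heq⟩ := (hmem _).mp haM
      have hb1 : b = bl[bl.length - k + i]'(by omega) := (Prod.mk.injEq _ _ _ _ ▸ heq).1
      obtain ⟨j, hj, rfl⟩ : ∃ j, ∃ hj : j < bl.length, bl[j] = b' :=
        List.mem_iff_getElem.mp (hBbl b' hb')
      by_cases hcase : bl.length - k ≤ j
      · refine ⟨al[j - (bl.length - k)]'(by omega), (hmem _).mpr ⟨j - (bl.length - k), by omega, ?_⟩⟩
        have : bl.length - k + (j - (bl.length - k)) = j := by omega
        simp only [this]
      · exfalso
        have := hbmono j (bl.length - k + i) (by omega) (by omega)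
        rw [hb1] at hlt
        linarith
    · rintro a ha a' ha' hlt ⟨b, hbM⟩
      obtain ⟨i, hi, heq⟩ := (hmem _).mp hbM
      have ha1 : a = al[i]'(by omega) := (Prod.mk.injEq _ _ _ _ ▸ heq).2
      obtain ⟨j, hj, rfl⟩ : ∃ j, ∃ hj : j < al.length, al[j] = a' :=
        List.mem_iff_getElem.mp (hAal a' ha')
      by_cases hcase : j < k
      · exact ⟨bl[bl.length - k + j]'(by omega), (hmem _).mpr ⟨j, hcase, rfl⟩⟩
      · exfalso
        have := hamono i j (by omega) hj
        rw [ha1] at hlt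
        linarith
  have horderly : IsOrderly pb pa Mstar := by
    intro x hx y hy
    obtain ⟨i, hi, rfl⟩ := (hmem x).mp hx
    obtain ⟨j, hj, rfl⟩ := (hmem y).mp hy
    constructor
    · intro hpa
      simp only at hpa ⊢
      have hij : i ≤ j := by
        by_contra hc
        exact absurd (hamono j i (by omega) (by omega)) (by linarith)
      exact hbmono _ _ (by omega) (by omega)
    · intro hpb
      simp only at hpb ⊢
      have hij : i ≤ j := by
        by_contra hc
        exact absurd (hbmono (bl.length - k + j) (bl.length - k + i) (by omega) (by omega))
          (by linarith)
      exact hamono _ _ hij (by omega)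
  have hcard : Mstar.card = k := by
    rw [hM_def, List.toFinset_card_of_nodup (aux_nodup_zip _ ((List.drop_sublist _ _).nodup hbln))]
    exact hzl
  refine ⟨Mstar, hmatch, hfair, horderly, ?_⟩
  intro M hM
  rw [hcard]
  have cover : ∀ t : ℝ, M.card ≤
      (B.filter (fun b => t ≤ pb b)).card + (A.filter (fun a => pa a < t)).card := by
    intro t
    rw [← Finset.card_disjSum]
    apply Finset.card_le_card_of_injOn (fun x => if t ≤ pb x.1 then Sum.inl x.1 else Sum.inr x.2)
    · intro x hx
      obtain ⟨hxB, hxA, hxv⟩ := hM.1 x hx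
      by_cases h : t ≤ pb x.1
      · simp only [h, if_true]
        exact Finset.inl_mem_disjSum.mpr (Finset.mem_filter.mpr ⟨hxB, h⟩)
      · simp only [h, if_false]
        exact Finset.inr_mem_disjSum.mpr (Finset.mem_filter.mpr ⟨hxA, by linarith [not_le.mp h]⟩)
    · intro x hx y hy hxy
      simp only [Finset.mem_coe] at hx hy
      by_cases h1 : t ≤ pb x.1 <;> by_cases h2 : t ≤ pb y.1 <;>
        simp only [h1, h2, if_true, if_false] at hxy
      · have h := Sum.inl.inj hxy
        exact Prod.ext h ((hM.2 x hx y hy).1 h)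
      · exact absurd hxy (by simp)
      · exact absurd hxy (by simp)
      · have h := Sum.inr.inj hxy
        exact Prod.ext ((hM.2 x hx y hy).2 h) h
  by_cases hklt : k < min bl.length al.length
  · -- there is a violated pair at level k+1
    have hnP : ¬ P (k + 1) := by
      intro h
      have := Nat.le_findGreatest (n := min bl.length al.length) (by omega) h
      omega
    obtain ⟨x, hxz, hxv⟩ : ∃ x ∈ (bl.drop (bl.length - (k + 1))).zip (al.take (k + 1)),
        ¬ pa x.2 ≤ pb x.1 := by
      by_contra hc
      push_neg at hc
      exact hnP ⟨by omega, by omega, fun x hx => (hc x hx)⟩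
    obtain ⟨i, hiz, hxe⟩ := List.mem_iff_getElem.mp hxz
    have hzl2 : ((bl.drop (bl.length - (k + 1))).zip (al.take (k + 1))).length = k + 1 := by
      rw [List.length_zip, List.length_drop, List.length_take]
      omega
    rw [hzl2] at hiz
    rw [List.getElem_zip] at hxe
    have hia : i < al.length := by omega
    have hib : bl.length - (k + 1) + i < bl.length := by omega
    set t := pa (al[i]'hia) with ht_def
    have hlt : pb (bl[bl.length - (k + 1) + i]'hib) < t := by
      have h1 : x.1 = bl[bl.length - (k + 1) + i]'hib := by
        rw [← hxe]; simp [List.getElem_drop]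
      have h2 : x.2 = al[i]'hia := by
        rw [← hxe]; simp [List.getElem_take]
      rw [ht_def, ← h1, ← h2]
      linarith [not_le.mp hxv]
    refine le_trans (cover t) ?_
    have hbb : (B.filter (fun b => t ≤ pb b)).card ≤ k - i := by
      rw [aux_card_filter B bl hblp]
      have hsplit := List.take_append_drop (bl.length - (k + 1) + i + 1) bl
      conv_lhs => rw [← hsplit]
      rw [List.filter_append]
      have hnil : (bl.take (bl.length - (k + 1) + i + 1)).filter
          (fun b => decide (t ≤ pb b)) = [] := by
        rw [List.filter_eq_nil_iff]
        intro a ha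
        obtain ⟨j, hjl, rfl⟩ := List.mem_iff_getElem.mp ha
        have hjl2 : j < bl.length - (k + 1) + i + 1 := by
          have : (bl.take (bl.length - (k + 1) + i + 1)).length = _ := List.length_take
          omega
        have hjb : j < bl.length := by omega
        have hget : (bl.take (bl.length - (k + 1) + i + 1))[j] = bl[j]'hjb :=
          List.getElem_take
        rw [hget]
        have := hbmono j (bl.length - (k + 1) + i) (by omega) hib
        simp only [decide_eq_true_eq]
        intro hcontra
        linarith
      rw [hnil, List.nil_append]
      calc ((bl.drop (bl.length - (k + 1) + i + 1)).filter
            (fun b => decide (t ≤ pb b))).length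
          ≤ (bl.drop (bl.length - (k + 1) + i + 1)).length := List.length_filter_le _ _
        _ = bl.length - (bl.length - (k + 1) + i + 1) := List.length_drop
        _ ≤ k - i := by omega
    have haa : (A.filter (fun a => pa a < t)).card ≤ i := by
      rw [aux_card_filter A al halp]
      have hsplit := List.take_append_drop i al
      conv_lhs => rw [← hsplit]
      rw [List.filter_append]
      have hnil : (al.drop i).filter (fun a => decide (pa a < t)) = [] := by
        rw [List.filter_eq_nil_iff]
        intro a ha
        obtain ⟨j, hjl, rfl⟩ := List.mem_iff_getElem.mp ha
        have hjd : (al.drop i).length = al.length - i := List.length_drop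
        have hget : (al.drop i)[j] = al[i + j]'(by omega) := List.getElem_drop
        rw [hget]
        have := hamono i (i + j) (by omega) (by omega)
        simp only [decide_eq_true_eq]
        intro hcontra
        linarith
      rw [hnil, List.append_nil]
      calc ((al.take i).filter (fun a => decide (pa a < t))).length
          ≤ (al.take i).length := List.length_filter_le _ _
        _ ≤ i := by rw [List.length_take]; omega
    omega
  · have hk_eq : k = min bl.length al.length :=
      le_antisymm (Nat.findGreatest_le _) (not_lt.mp hklt)
    rcases le_total bl.length al.length with hle | hle
    · -- k = bl.length; pick t below all ask prices
      by_cases hA : A.Nonempty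
      · set t := (A.image pa).min' (hA.image pa) with ht_def
        refine le_trans (cover t) ?_
        have h1 : (A.filter (fun a => pa a < t)).card = 0 := by
          rw [Finset.card_eq_zero, Finset.filter_eq_empty_iff]
          intro a ha
          have := Finset.min'_le (A.image pa) (pa a) (Finset.mem_image_of_mem pa ha)
          push_neg
          linarith
        have h2 : (B.filter (fun b => t ≤ pb b)).card ≤ B.card := Finset.card_filter_le _ _
        have h3 : B.card = bl.length := by rw [hblp.length_eq, Finset.length_toList]
        omega
      · -- A empty, so al empty, k = 0 and every matching is empty
        have hA0 : A.card = 0 := by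
          rw [Finset.card_eq_zero]
          exact Finset.not_nonempty_iff_eq_empty.mp hA
        have hml : al.length = 0 := by rw [halp.length_eq, Finset.length_toList, hA0]
        refine le_trans (cover 0) ?_
        have h1 : (A.filter (fun a => pa a < 0)).card ≤ A.card := Finset.card_filter_le _ _
        have h2 : (B.filter (fun b => (0:ℝ) ≤ pb b)).card ≤ B.card := Finset.card_filter_le _ _
        have h3 : B.card = bl.length := by rw [hblp.length_eq, Finset.length_toList]
        omega
    · -- k = al.length; pick t above all bid prices
      by_cases hB : B.Nonempty
      · set t := (B.image pb).max' (hB.image pb) + 1 with ht_def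
        refine le_trans (cover t) ?_
        have h1 : (B.filter (fun b => t ≤ pb b)).card = 0 := by
          rw [Finset.card_eq_zero, Finset.filter_eq_empty_iff]
          intro b hb
          have := Finset.le_max' (B.image pb) (pb b) (Finset.mem_image_of_mem pb hb)
          push_neg
          rw [ht_def]
          linarith
        have h2 : (A.filter (fun a => pa a < t)).card ≤ A.card := Finset.card_filter_le _ _
        have h3 : A.card = al.length := by rw [halp.length_eq, Finset.length_toList]
        omega
      · have hB0 : B.card = 0 := by
          rw [Finset.card_eq_zero]
          exact Finset.not_nonempty_iff_eq_empty.mp hB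
        have hml : bl.length = 0 := by rw [hblp.length_eq, Finset.length_toList, hB0]
        refine le_trans (cover 0) ?_
        have h1 : (A.filter (fun a => pa a < 0)).card ≤ A.card := Finset.card_filter_le _ _
        have h2 : (B.filter (fun b => (0:ℝ) ≤ pb b)).card ≤ B.card := Finset.card_filter_le _ _
        have h3 : A.card = al.length := by rw [halp.length_eq, Finset.length_toList]
        omega
end

section
/- For every matching set M between B and A and every price p ∈ ℝ, the trading volume of M is at most the sum of the supply and the demand at p: M.card ≤ S(p) + D(p). (Paper's Lemma 4.) -/
theorem volume_le_supply_add_demand {β α : Type*} [DecidableEq β] [DecidableEq α]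
    (B : Finset β) (A : Finset α) (pb : β → ℝ) (pa : α → ℝ)
    (M : Finset (β × α)) (hM : IsMatchingSet B A pb pa M) (p : ℝ) :
    M.card ≤ (A.filter (fun a => pa a ≤ p)).card + (B.filter (fun b => p ≤ pb b)).card := by
  obtain ⟨h1, h2⟩ := hM
  have key : M.card = (M.filter (fun x => pa x.2 ≤ p)).card
      + (M.filter (fun x => ¬ pa x.2 ≤ p)).card :=
    (Finset.card_filter_add_card_filter_not _).symm
  rw [key]
  apply add_le_add
  · apply Finset.card_le_card_of_injOn Prod.snd
    · intro x hx
      simp only [Finset.mem_coe, Finset.mem_filter] at hx ⊢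
      exact ⟨(h1 x hx.1).2.1, hx.2⟩
    · intro x hx y hy hxy
      simp only [Finset.coe_filter, Set.mem_setOf_eq] at hx hy
      have := (h2 x hx.1 y hy.1).2 hxy
      exact Prod.ext this hxy
  · apply Finset.card_le_card_of_injOn Prod.fst
    · intro x hx
      simp only [Finset.mem_coe, Finset.mem_filter] at hx ⊢
      refine ⟨(h1 x hx.1).1, ?_⟩
      have := (h1 x hx.1).2.2
      push_neg at hx
      linarith [hx.2]
    · intro x hx y hy hxy
      simp only [Finset.coe_filter, Set.mem_setOf_eq] at hx hy
      have := (h2 x hx.1 y hy.1).1 hxy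
      exact Prod.ext hxy this
end

section
/- For every price p ∈ ℝ, there exists a matching set M between B and A with trading volume M.card = min (S(p)) (D(p)) such that every pair (b, a) ∈ M satisfies pa a ≤ p and p ≤ pb b. (The content of the paper's equation (1): equilibrium matching at price p clears min(S(p), D(p)) units by matching only asks priced at most p with bids priced at least p.) -/
theorem equilibrium_matching_at_price {β α : Type*} [DecidableEq β] [DecidableEq α]
    (B : Finset β) (A : Finset α) (pb : β → ℝ) (pa : α → ℝ) (p : ℝ) :
    ∃ M : Finset (β × α), IsMatchingSet B A pb pa M ∧
      M.card = min (A.filter (fun a => pa a ≤ p)).card (B.filter (fun b => p ≤ pb b)).card ∧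
      ∀ x ∈ M, pa x.2 ≤ p ∧ p ≤ pb x.1 := by
  set As := A.filter (fun a => pa a ≤ p) with hAs
  set Bs := B.filter (fun b => p ≤ pb b) with hBs
  set n := min As.card Bs.card with hn
  obtain ⟨A', hA'sub, hA'card⟩ := Finset.exists_subset_card_eq (s := As) (n := n) (min_le_left _ _)
  obtain ⟨B', hB'sub, hB'card⟩ := Finset.exists_subset_card_eq (s := Bs) (n := n) (min_le_right _ _)
  have hcards : B'.card = A'.card := by rw [hA'card, hB'card]
  let e : B' ≃ A' := Finset.equivOfCardEq hcards
  refine ⟨B'.attach.image (fun (b : {x // x ∈ B'}) => ((b : β), ((e b : A') : α))), ?_, ?_, ?_⟩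
  · constructor
    · rintro x hx
      simp only [Finset.mem_image, Finset.mem_attach, true_and] at hx
      obtain ⟨b, rfl⟩ := hx
      have hb : (b : β) ∈ Bs := hB'sub b.2
      have ha : ((e b : A') : α) ∈ As := hA'sub (e b).2
      rw [hBs, Finset.mem_filter] at hb
      rw [hAs, Finset.mem_filter] at ha
      exact ⟨hb.1, ha.1, le_trans ha.2 hb.2⟩
    · rintro x hx y hy
      simp only [Finset.mem_image, Finset.mem_attach, true_and] at hx hy
      obtain ⟨b, rfl⟩ := hx
      obtain ⟨c, rfl⟩ := hy
      constructor
      · intro h; simp only [Subtype.coe_inj] at h; subst h; rfl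
      · intro h
        have : e b = e c := Subtype.coe_injective h
        have : b = c := e.injective this
        subst this; rfl
  · rw [Finset.card_image_of_injective _ (fun b c h => by
      simpa [Subtype.coe_inj] using congrArg Prod.fst h), Finset.card_attach, hB'card]
  · rintro x hx
    simp only [Finset.mem_image, Finset.mem_attach, true_and] at hx
    obtain ⟨b, rfl⟩ := hx
    have hb : (b : β) ∈ Bs := hB'sub b.2
    have ha : ((e b : A') : α) ∈ As := hA'sub (e b).2
    rw [hBs, Finset.mem_filter] at hb
    rw [hAs, Finset.mem_filter] at ha
    exact ⟨ha.2, hb.2⟩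
end
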